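/- A primitive word u is not ins-robust if and only if some cyclic permutation u' of u is periodic with a period p such that p divides |u| + 1 and p ≤ |u|. -/
import Mathlib

/-- `wpow v n` is the word `v` repeated `n` times. -/
def wpow {V : Type*} (v : List V) : ℕ → List V
  | 0 => []
  | n + 1 => v ++ wpow v n

/-- A word is primitive if it is nonempty and not a proper power. -/
def Primitive {V : Type*} (w : List V) : Prop :=
  w ≠ [] ∧ ∀ (v : List V) (n : ℕ), w = wpow v n → n = 1

/-- A word is ins-robust if it is primitive and inserting any letter at any
position yields a primitive word. -/
def InsRobust {V : Type*} (w : List V) : Prop :=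
  Primitive w ∧ ∀ (x y : List V) (a : V), w = x ++ y → Primitive (x ++ a :: y)

/-- `HasPeriod w p` : the word `w` is periodic with period `p`. -/
def HasPeriod {V : Type*} (w : List V) (p : ℕ) : Prop :=
  ∀ i, i + p < w.length → w[i]? = w[i + p]?

lemma wpow_length {V : Type*} (v : List V) (n : ℕ) :
    (wpow v n).length = n * v.length := by
  induction n with
  | zero => simp [wpow]
  | succ n ih =>
    show (v ++ wpow v n).length = _
    rw [List.length_append, ih, Nat.succ_mul]
    omega

lemma wpow_getElem? {V : Type*} (v : List V) (n i : ℕ) (h : i < n * v.length) :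
    (wpow v n)[i]? = v[i % v.length]? := by
  induction n generalizing i with
  | zero => rw [Nat.zero_mul] at h; omega
  | succ n ih =>
    have hv : 0 < v.length := by
      rcases Nat.eq_zero_or_pos v.length with h0 | h0
      · rw [h0, Nat.mul_zero] at h; omega
      · exact h0
    have h' : i < n * v.length + v.length := by rw [Nat.succ_mul] at h; omega
    show (v ++ wpow v n)[i]? = _
    rcases lt_or_ge i v.length with hi | hi
    · rw [List.getElem?_append_left hi, Nat.mod_eq_of_lt hi]
    · rw [List.getElem?_append_right hi, ih (i - v.length) (by omega),
        Nat.mod_eq_sub_mod hi]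

lemma wpow_hasPeriod {V : Type*} (v : List V) (n : ℕ) :
    HasPeriod (wpow v n) v.length := by
  intro i h
  rw [wpow_length] at h
  rw [wpow_getElem? v n i (by omega), wpow_getElem? v n _ (by omega),
    Nat.add_mod_right]

lemma period_mod {V : Type*} {w : List V} {p : ℕ} (hp : 0 < p)
    (h : HasPeriod w p) : ∀ i < w.length, w[i]? = w[i % p]? := by
  intro i
  induction i using Nat.strong_induction_on with
  | _ i ih =>
    intro hi
    rcases lt_or_ge i p with h' | h'
    · rw [Nat.mod_eq_of_lt h']
    · have h1 := h (i - p) (by omega)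
      have h2 := ih (i - p) (by omega) (by omega)
      rw [Nat.mod_eq_sub_mod h', ← h2, h1]
      congr 1
      omega

lemma period_wpow {V : Type*} {w : List V} {p : ℕ} (hp : 0 < p)
    (hd : p ∣ w.length) (h : HasPeriod w p) :
    w = wpow (w.take p) (w.length / p) := by
  rcases Nat.eq_zero_or_pos w.length with h0 | h0
  · rw [List.length_eq_zero_iff] at h0
    simp [h0, wpow]
  have hpl : p ≤ w.length := Nat.le_of_dvd h0 hd
  have htl : (w.take p).length = p := by rw [List.length_take]; omega
  apply List.ext_getElem?
  intro i
  rcases lt_or_ge i w.length with hi | hi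
  · have h1 : i < w.length / p * (w.take p).length := by
      rw [htl, Nat.div_mul_cancel hd]; exact hi
    rw [wpow_getElem? _ _ _ h1, htl, List.getElem?_take,
      if_pos (Nat.mod_lt i hp)]
    exact period_mod hp h i hi
  · rw [List.getElem?_eq_none hi, List.getElem?_eq_none]
    rw [wpow_length, htl, Nat.div_mul_cancel hd]
    exact hi

lemma cyc_key {V : Type*} {w : List V} {p : ℕ} (hp : 0 < p)
    (h : HasPeriod w p) {j k : ℕ} (hj : j < w.length) (hk : k < w.length)
    (hmod : j % p = k % p) : w[j]? = w[k]? := by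
  rw [period_mod hp h j hj, period_mod hp h k hk, hmod]

theorem stmt16 {V : Type*} (u : List V) (hu : Primitive u) :
    ¬ InsRobust u ↔ ∃ (x y : List V) (p : ℕ),
      u = x ++ y ∧ p ∣ u.length + 1 ∧ p ≤ u.length ∧ HasPeriod (y ++ x) p := by
  have hune : u ≠ [] := hu.1
  have hulen : 0 < u.length := List.length_pos_iff.mpr hune
  constructor
  · intro hni
    have h2 : ¬ ∀ (x y : List V) (a : V), u = x ++ y → Primitive (x ++ a :: y) :=
      fun h => hni ⟨hu, h⟩
    push_neg at h2
    obtain ⟨x, y, a, hxy, hnp⟩ := h2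
    rw [Primitive] at hnp
    push_neg at hnp
    obtain ⟨v, n, hw, hn⟩ := hnp (by simp)
    have hxyl : u.length = x.length + y.length := by rw [hxy]; simp
    have hwl : (x ++ a :: y).length = u.length + 1 := by
      simp only [List.length_append, List.length_cons]; omega
    set p := v.length with hpd
    have hnp2 : u.length + 1 = n * p := by rw [← hwl, hw, wpow_length]
    have hn0 : n ≠ 0 := by rintro rfl; rw [Nat.zero_mul] at hnp2; omega
    have hn2 : 2 ≤ n := by omega
    have hp : 0 < p := by
      rcases Nat.eq_zero_or_pos p with h0 | h0
      · rw [h0, Nat.mul_zero] at hnp2; omega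
      · exact h0
    have h2p : 2 * p ≤ n * p := Nat.mul_le_mul_right p hn2
    have hbig : 2 * p ≤ u.length + 1 := by rw [hnp2]; exact h2p
    have hple : p ≤ u.length := by omega
    have hdv : p ∣ u.length + 1 := ⟨n, by rw [hnp2, Nat.mul_comm]⟩
    have hper : HasPeriod (x ++ a :: y) p := by rw [hw]; exact wpow_hasPeriod v n
    refine ⟨x, y, p, hxy, hdv, hple, ?_⟩
    intro i hi
    rw [List.length_append] at hi
    have ey : ∀ j < y.length, (y ++ x)[j]? = (x ++ a :: y)[x.length + 1 + j]? := by
      intro j hj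
      rw [List.getElem?_append_left hj,
        List.getElem?_append_right (by omega : x.length ≤ x.length + 1 + j)]
      have h3 : x.length + 1 + j - x.length = j + 1 := by omega
      rw [h3, List.getElem?_cons_succ]
    have ex : ∀ j, y.length ≤ j → j < u.length →
        (y ++ x)[j]? = (x ++ a :: y)[j - y.length]? := by
      intro j hj hj2
      rw [List.getElem?_append_right hj, List.getElem?_append_left (by omega)]
    rcases lt_or_ge (i + p) y.length with hc1 | hc1
    · rw [ey i (by omega), ey (i + p) hc1]
      refine cyc_key hp hper (by omega) (by omega) ?_
      have h3 : x.length + 1 + (i + p) = (x.length + 1 + i) + p := by omega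
      rw [h3, Nat.add_mod_right]
    · rcases lt_or_ge i y.length with hc2 | hc2
      · rw [ey i hc2, ex (i + p) hc1 (by omega)]
        refine cyc_key hp hper (by omega) (by omega) ?_
        have hdvd' : p ∣ u.length + 1 - p := Nat.dvd_sub hdv dvd_rfl
        have hmeq : (i + p - y.length) ≡ (x.length + 1 + i) [MOD p] := by
          rw [Nat.modEq_iff_dvd' (by omega)]
          have h3 : x.length + 1 + i - (i + p - y.length) = u.length + 1 - p := by
            omega
          rw [h3]; exact hdvd'
        exact hmeq.symm
      · rw [ex i hc2 (by omega), ex (i + p) (by omega) (by omega)]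
        refine cyc_key hp hper (by omega) (by omega) ?_
        have h3 : i + p - y.length = (i - y.length) + p := by omega
        rw [h3, Nat.add_mod_right]
  · rintro ⟨x, y, p, hxy, hdvd, hple, hper⟩
    have hxyl : u.length = x.length + y.length := by rw [hxy]; simp
    have hwlen : (y ++ x).length = u.length := by
      rw [List.length_append]; omega
    have hp : 0 < p := by
      rcases Nat.eq_zero_or_pos p with rfl | h
      · rw [Nat.zero_dvd] at hdvd; omega
      · exact h
    have hmlt : u.length % p < (y ++ x).length := by
      rw [hwlen]; exact lt_of_lt_of_le (Nat.mod_lt _ hp) hple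
    set a : V := (y ++ x)[u.length % p]'hmlt with had
    have ha : (y ++ x)[u.length % p]? = some a := List.getElem?_eq_getElem hmlt
    rintro ⟨-, hins⟩
    have hprim := hins x y a hxy
    have wmod := period_mod hp hper
    rw [hwlen] at wmod
    have claim : ∀ i < u.length + 1,
        (x ++ a :: y)[i]? = (y ++ x)[(i + y.length) % p]? := by
      intro i hi
      rcases lt_trichotomy i x.length with hc | hc | hc
      · rw [List.getElem?_append_left hc]
        have h3 : x[i]? = (y ++ x)[i + y.length]? := by
          rw [List.getElem?_append_right (by omega : y.length ≤ i + y.length)]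
          congr 1
          omega
        rw [h3, wmod (i + y.length) (by omega)]
      · subst hc
        rw [List.getElem?_append_right le_rfl, Nat.sub_self,
          List.getElem?_cons_zero, ← hxyl]
        exact ha.symm
      · rw [List.getElem?_append_right (by omega : x.length ≤ i)]
        have h1 : i - x.length = (i - x.length - 1) + 1 := by omega
        rw [h1, List.getElem?_cons_succ]
        have h2 : y[i - x.length - 1]? = (y ++ x)[i - x.length - 1]? := by
          rw [List.getElem?_append_left (by omega)]
        rw [h2, wmod (i - x.length - 1) (by omega)]
        have hmeq : (i - x.length - 1) ≡ (i + y.length) [MOD p] := by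
          rw [Nat.modEq_iff_dvd' (by omega)]
          have h3 : i + y.length - (i - x.length - 1) = u.length + 1 := by omega
          rw [h3]; exact hdvd
        rw [hmeq]
    have hL : (x ++ a :: y).length = u.length + 1 := by
      simp only [List.length_append, List.length_cons]; omega
    have hper' : HasPeriod (x ++ a :: y) p := by
      intro i hi
      rw [hL] at hi
      rw [claim i (by omega), claim (i + p) hi]
      have h3 : i + p + y.length = (i + y.length) + p := by omega
      rw [h3, Nat.add_mod_right]
    have hdvd2 : p ∣ (x ++ a :: y).length := by rw [hL]; exact hdvd
    have heq := period_wpow hp hdvd2 hper'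
    have hn := hprim.2 _ _ heq
    rw [hL] at hn
    have hdm := Nat.div_mul_cancel hdvd
    rw [hn, Nat.one_mul] at hdm
    omega
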